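/- Let γ ≥ 1 and let K be a compact subset of a real Banach space X contained in a ball of radius R, and suppose δ*_{m,γ}(K)_X → 0 as m → ∞. Define φ(t) := min{m ≥ 0 : δ*_{m,γ}(K)_X ≤ t} for t > 0. Given ε > 0, let L be the smallest positive integer with 2^L ε ≥ R. Then K can be covered by N(ε) balls of radius ε, where N(ε) ≤ (1+16γ²)^{Σ_{k=1}^{L} φ(2^k ε/8)}. -/

import Mathlib

open Metric

def IsNorm {n : ℕ} (nrm : (Fin n → ℝ) → ℝ) : Prop :=
  (∀ x, 0 ≤ nrm x) ∧
  (∀ x, nrm x = 0 → x = 0) ∧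
  (∀ (c : ℝ) (x), nrm (c • x) = |c| * nrm x) ∧
  (∀ x y, nrm (x + y) ≤ nrm x + nrm y)

noncomputable def stableWidth (X : Type*) [NormedAddCommGroup X]
    (K : Set X) (n : ℕ) (γ : ℝ) : ℝ :=
  sInf { d | ∃ (nrm : (Fin n → ℝ) → ℝ) (a : X → Fin n → ℝ) (M : (Fin n → ℝ) → X),
    IsNorm nrm ∧
    (∀ f ∈ K, ∀ g ∈ K, nrm (a f - a g) ≤ γ * ‖f - g‖) ∧
    (∀ x y, ‖M x - M y‖ ≤ γ * nrm (x - y)) ∧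
    d = ⨆ f : K, ‖(f : X) - M (a (f : X))‖ }

noncomputable def modStableWidth (X : Type*) [NormedAddCommGroup X]
    (K : Set X) (n : ℕ) (γ : ℝ) : ℝ :=
  sInf { d | ∃ (nrm : (Fin n → ℝ) → ℝ) (a : X → Fin n → ℝ) (M : (Fin n → ℝ) → X),
    IsNorm nrm ∧
    (∀ f g : X, nrm (a f - a g) ≤ γ * ‖f - g‖) ∧
    (∀ x y, ‖M x - M y‖ ≤ γ * nrm (x - y)) ∧
    d = ⨆ f : K, ‖(f : X) - M (a (f : X))‖ }

noncomputable def entropyNumber (X : Type*) [NormedAddCommGroup X] (K : Set X) (n : ℕ) : ℝ :=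
  sInf { ε : ℝ | 0 < ε ∧ ∃ T : Finset X, T.card ≤ 2 ^ n ∧ K ⊆ ⋃ c ∈ T, closedBall c ε }

/-!
If `δ*_{n,γ}(K) ≤ r / 8`, the encoder `a` of a near-optimal triple maps `K ∩ B(c, r)` into a ball
of radius `2γr` in the `n`-dimensional normed space `(ℝⁿ, ‖·‖_Y)`. A volume comparison covers that
ball by `(1 + 16γ²)ⁿ` balls of radius `r / (4γ)`; pulling their centres back to `K` and using the
decoder `M` covers `K ∩ B(c, r)` by as many balls of radius `r / 2`. Since the width need not be
attained, this is first done with `1 + 16γ² + η`, and `η → 0` is allowed because cardinalities are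
integers. Halving the radius `L` times, starting from `K ⊆ B(x₀, 2^L ε)`, multiplies the counts.
-/

open MeasureTheory Filter Topology Bornology
open scoped NNReal ENNReal

section Packing

variable {E : Type*} [NormedAddCommGroup E] [NormedSpace ℝ E] [FiniteDimensional ℝ E]

theorem Metric.IsSeparated.card_le_of_subset_closedBall {F : Finset E} {s : ℝ≥0} (hs : 0 < s)
    {z : E} {ρ : ℝ} (hρ : 0 ≤ ρ) (hFz : (F : Set E) ⊆ closedBall z ρ)
    (hF : IsSeparated s (F : Set E)) :
    (F.card : ℝ) ≤ (1 + 2 * ρ / s) ^ Module.finrank ℝ E := by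
  borelize E
  set μ : Measure E := Measure.addHaar
  set d := Module.finrank ℝ E
  have hdisj : (F : Set E).PairwiseDisjoint fun x => ball x (s / 2) := by
    intro x hx y hy hxy
    refine ball_disjoint_ball ?_
    have : (s : ℝ≥0∞) < edist x y := hF hx hy hxy
    rw [edist_dist, ← ENNReal.ofReal_coe_nnreal,
      ENNReal.ofReal_lt_ofReal_iff_of_nonneg s.coe_nonneg] at this
    linarith
  have hsub : (⋃ x ∈ F, ball x (s / 2)) ⊆ ball z (ρ + s / 2) :=
    Set.iUnion₂_subset fun x hx => ball_subset_ball' (by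
      have := hFz hx; rw [mem_closedBall] at this; linarith)
  have hvol : (F.card : ℝ≥0∞) * ENNReal.ofReal ((s / 2) ^ d) * μ (ball 0 1)
      ≤ ENNReal.ofReal ((ρ + s / 2) ^ d) * μ (ball 0 1) := by
    calc _ = μ (⋃ x ∈ F, ball x (s / 2)) := by
          rw [measure_biUnion_finset hdisj fun x _ => measurableSet_ball,
            Finset.sum_congr rfl fun x _ => μ.addHaar_ball_of_pos x (by positivity),
            Finset.sum_const, nsmul_eq_mul, mul_assoc]
      _ ≤ μ (ball z (ρ + s / 2)) := measure_mono hsub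
      _ = _ := μ.addHaar_ball_of_pos z (by positivity)
  have hcount : (F.card : ℝ) * (s / 2) ^ d ≤ (ρ + s / 2) ^ d := by
    rw [ENNReal.mul_le_mul_iff_left (measure_ball_pos μ 0 one_pos).ne' measure_ball_lt_top.ne,
      ← ENNReal.ofReal_natCast, ← ENNReal.ofReal_mul (by positivity),
      ENNReal.ofReal_le_ofReal_iff (by positivity)] at hvol
    exact hvol
  rwa [show 1 + 2 * ρ / s = (ρ + s / 2) / (s / 2) by field_simp; ring, div_pow,
    le_div_iff₀ (by positivity)]

theorem Metric.exists_finset_subset_iUnion_closedBall_card_le {A : Set E} {s : ℝ} (hs : 0 < s)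
    {z : E} {ρ : ℝ} (hρ : 0 ≤ ρ) (hA : A ⊆ closedBall z ρ) :
    ∃ F : Finset E, ↑F ⊆ A ∧ A ⊆ ⋃ x ∈ F, closedBall x s ∧
      (F.card : ℝ) ≤ (1 + 2 * ρ / s) ^ Module.finrank ℝ E := by
  lift s to ℝ≥0 using hs.le
  set N := ⌊(1 + 2 * ρ / s) ^ Module.finrank ℝ E⌋₊
  have hencard : ∀ C ⊆ A, IsSeparated s C → C.encard ≤ N := by
    intro C hCA hC
    by_contra! hlt
    obtain ⟨t, htC, ht⟩ := Set.exists_subset_encard_eq (Order.add_one_le_of_lt hlt)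
    have htfin : t.Finite := Set.finite_of_encard_eq_coe ht
    have hcard : htfin.toFinset.card = N + 1 := by
      rw [htfin.encard_eq_coe_toFinset_card] at ht; exact_mod_cast ht
    have := IsSeparated.card_le_of_subset_closedBall (F := htfin.toFinset) hs hρ
      (by simpa using htC.trans (hCA.trans hA)) (by simpa using hC.subset htC)
    rw [hcard, Nat.cast_add_one] at this
    exact (Nat.lt_floor_add_one _).not_ge this
  have hpack : packingNumber s A ≠ ⊤ :=
    ne_top_of_le_ne_top (ENat.natCast_ne_top N) (iSup₂_le fun C hC => iSup_le (hencard C hC))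
  have hfin : (maximalSeparatedSet s A).Finite :=
    Set.encard_ne_top_iff.mp (encard_maximalSeparatedSet hpack ▸ hpack)
  refine ⟨hfin.toFinset, by simpa using maximalSeparatedSet_subset, ?_, ?_⟩
  · simpa [isCover_iff_subset_iUnion_closedBall] using isCover_maximalSeparatedSet hpack
  · exact IsSeparated.card_le_of_subset_closedBall hs hρ
      (by simpa using maximalSeparatedSet_subset.trans hA)
      (by simpa using isSeparated_maximalSeparatedSet)

end Packing

section IsNorm

variable {n : ℕ} {nrm : (Fin n → ℝ) → ℝ}

theorem IsNorm.map_zero (h : IsNorm nrm) : nrm 0 = 0 := by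
  simpa using h.2.2.1 0 0

theorem IsNorm.map_neg (h : IsNorm nrm) (x : Fin n → ℝ) : nrm (-x) = nrm x := by
  simpa using h.2.2.1 (-1) x

theorem isNorm_norm : IsNorm (‖·‖ : (Fin n → ℝ) → ℝ) :=
  ⟨norm_nonneg, fun _ => norm_eq_zero.1, fun c x => by simp only [norm_smul, Real.norm_eq_abs],
    norm_add_le⟩

end IsNorm

def WithNorm {n : ℕ} (_nrm : (Fin n → ℝ) → ℝ) : Type := Fin n → ℝ

namespace WithNorm

variable {n : ℕ} (nrm : (Fin n → ℝ) → ℝ)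

instance : AddCommGroup (WithNorm nrm) := inferInstanceAs (AddCommGroup (Fin n → ℝ))

instance : Module ℝ (WithNorm nrm) := inferInstanceAs (Module ℝ (Fin n → ℝ))

instance : FiniteDimensional ℝ (WithNorm nrm) :=
  inferInstanceAs (FiniteDimensional ℝ (Fin n → ℝ))

instance [h : Fact (IsNorm nrm)] : NormedAddCommGroup (WithNorm nrm) :=
  AddGroupNorm.toNormedAddCommGroup
    { toFun := nrm
      map_zero' := h.out.map_zero
      add_le' := h.out.2.2.2
      neg' := h.out.map_neg
      eq_zero_of_map_eq_zero' := h.out.2.1 }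

instance [h : Fact (IsNorm nrm)] : NormedSpace ℝ (WithNorm nrm) where
  norm_smul_le c x := (h.out.2.2.1 c x).le

theorem finrank_eq : Module.finrank ℝ (WithNorm nrm) = n := Module.finrank_fin_fun ℝ

theorem dist_eq [Fact (IsNorm nrm)] (x y : WithNorm nrm) : dist x y = nrm (x - y) :=
  dist_eq_norm x y

end WithNorm

theorem Finset.exists_card_le_of_tendsto {α ι : Type*} {l : Filter ι} [l.NeBot]
    {P : Finset α → Prop} {f : ι → ℝ} {B : ℝ} (hf : Tendsto f l (𝓝 B))
    (h : ∀ᶠ i in l, ∃ T : Finset α, (T.card : ℝ) ≤ f i ∧ P T) :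
    ∃ T : Finset α, (T.card : ℝ) ≤ B ∧ P T := by
  obtain ⟨i, ⟨T, hcard, hT⟩, hi⟩ :=
    (h.and (hf.eventually_lt_const (Int.lt_floor_add_one B))).exists
  refine ⟨T, Int.le_floor.1 (Int.lt_add_one_iff.1 ?_), hT⟩
  exact_mod_cast hcard.trans_lt hi

section Refine

variable {X : Type*} [PseudoMetricSpace X] {K : Set X}

theorem exists_finset_cover_of_refine {T : Finset X} {r r' m : ℝ}
    (hT : K ⊆ ⋃ c ∈ T, closedBall c r')
    (hrefine : ∀ c, ∃ S : Finset X, (S.card : ℝ) ≤ m ∧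
      K ∩ closedBall c r' ⊆ ⋃ x ∈ S, closedBall x r) :
    ∃ S : Finset X, (S.card : ℝ) ≤ T.card * m ∧ K ⊆ ⋃ x ∈ S, closedBall x r := by
  classical
  choose S hScard hS using hrefine
  refine ⟨T.biUnion S, ?_, fun f hf => ?_⟩
  · calc ((T.biUnion S).card : ℝ) ≤ ∑ c ∈ T, ((S c).card : ℝ) := by
          exact_mod_cast Finset.card_biUnion_le
      _ ≤ ∑ _c ∈ T, m := Finset.sum_le_sum fun c _ => hScard c
      _ = T.card * m := by rw [Finset.sum_const, nsmul_eq_mul]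
  obtain ⟨c, hcT, hfc⟩ := Set.mem_iUnion₂.1 (hT hf)
  obtain ⟨x, hxS, hfx⟩ := Set.mem_iUnion₂.1 (hS c ⟨hf, hfc⟩)
  exact Set.mem_iUnion₂.2 ⟨x, Finset.mem_biUnion.2 ⟨c, hcT, hxS⟩, hfx⟩

theorem exists_finset_cover_of_forall_refine {x₀ : X} {L : ℕ} {r N : ℕ → ℝ}
    (hN : ∀ k, 0 ≤ N k) (hK : K ⊆ closedBall x₀ (r L))
    (hrefine : ∀ k < L, ∀ c, ∃ S : Finset X, (S.card : ℝ) ≤ N k ∧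
      K ∩ closedBall c (r (k + 1)) ⊆ ⋃ x ∈ S, closedBall x (r k)) :
    ∃ T : Finset X, (T.card : ℝ) ≤ ∏ k ∈ Finset.range L, N k ∧
      K ⊆ ⋃ c ∈ T, closedBall c (r 0) := by
  induction L generalizing r N with
  | zero => exact ⟨{x₀}, by simp, by simpa using hK⟩
  | succ L ih =>
    obtain ⟨T, hTcard, hT⟩ := ih (r := fun k => r (k + 1)) (N := fun k => N (k + 1))
      (fun k => hN (k + 1)) hK fun k hk => hrefine (k + 1) (by omega)
    obtain ⟨S, hScard, hS⟩ := exists_finset_cover_of_refine hT (hrefine 0 L.succ_pos)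
    refine ⟨S, hScard.trans ?_, hS⟩
    rw [Finset.prod_range_succ']
    exact mul_le_mul_of_nonneg_right hTcard (hN 0)

end Refine

section StableWidth

variable {X : Type*} [NormedAddCommGroup X]

theorem exists_approx_of_stableWidth_lt {K : Set X} (hK : IsBounded K) {n : ℕ}
    {γ b : ℝ} (hγ : 0 ≤ γ) (hb : stableWidth X K n γ < b) :
    ∃ (nrm : (Fin n → ℝ) → ℝ) (a : X → Fin n → ℝ) (M : (Fin n → ℝ) → X),
      IsNorm nrm ∧ (∀ f ∈ K, ∀ g ∈ K, nrm (a f - a g) ≤ γ * ‖f - g‖) ∧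
      (∀ x y, ‖M x - M y‖ ≤ γ * nrm (x - y)) ∧ ∀ f ∈ K, ‖f - M (a f)‖ ≤ b := by
  obtain ⟨_, ⟨nrm, a, M, hnrm, ha, hM, rfl⟩, hlt⟩ := exists_lt_of_csInf_lt
    (by exact ⟨_, _, 0, 0, isNorm_norm, fun _ _ _ _ => by simp [mul_nonneg hγ],
      fun _ _ => by simp [mul_nonneg hγ], rfl⟩) hb
  refine ⟨nrm, a, M, hnrm, ha, hM, fun f hf => (le_ciSup ?_ ⟨f, hf⟩).trans hlt.le⟩
  obtain ⟨C, hC⟩ := Metric.isBounded_iff.1 hK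
  refine ⟨C + ‖f - M (a f)‖ + γ * (γ * C), ?_⟩
  rintro _ ⟨⟨g, hg⟩, rfl⟩
  have hgf : ‖g - f‖ ≤ C := dist_eq_norm g f ▸ hC hg hf
  have hMa : ‖M (a f) - M (a g)‖ ≤ γ * (γ * C) :=
    (hM _ _).trans (mul_le_mul_of_nonneg_left ((ha f hf g hg).trans
      (mul_le_mul_of_nonneg_left (dist_eq_norm f g ▸ hC hf hg) hγ)) hγ)
  calc ‖g - M (a g)‖ = ‖(g - f) + (f - M (a f)) + (M (a f) - M (a g))‖ := by abel_nf
    _ ≤ ‖g - f‖ + ‖f - M (a f)‖ + ‖M (a f) - M (a g)‖ := norm_add₃_le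
    _ ≤ _ := by gcongr

theorem exists_finset_cover_of_approx {n : ℕ} {nrm : (Fin n → ℝ) → ℝ} (hnrm : IsNorm nrm)
    {a : X → Fin n → ℝ} {M : (Fin n → ℝ) → X} {K : Set X} {γ δ r s : ℝ} (hγ : 0 ≤ γ)
    (hr : 0 ≤ r) (hs : 0 < s) (ha : ∀ f ∈ K, ∀ g ∈ K, nrm (a f - a g) ≤ γ * ‖f - g‖)
    (hM : ∀ x y, ‖M x - M y‖ ≤ γ * nrm (x - y)) (hδ : ∀ f ∈ K, ‖f - M (a f)‖ ≤ δ) (c : X) :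
    ∃ T : Finset X, (T.card : ℝ) ≤ (1 + 4 * γ * r / s) ^ n ∧
      K ∩ closedBall c r ⊆ ⋃ x ∈ T, closedBall x (γ * s + 2 * δ) := by
  classical
  have : Fact (IsNorm nrm) := ⟨hnrm⟩
  set S := K ∩ closedBall c r
  rcases S.eq_empty_or_nonempty with hS | ⟨f₀, hf₀⟩
  · exact ⟨∅, by simp only [Finset.card_empty, Nat.cast_zero]; positivity, by simp [hS]⟩
  let a' : X → WithNorm nrm := a
  have hA : a' '' S ⊆ closedBall (a' f₀) (2 * γ * r) := by
    rintro _ ⟨f, hf, rfl⟩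
    rw [mem_closedBall, WithNorm.dist_eq]
    calc nrm (a f - a f₀) ≤ γ * ‖f - f₀‖ := ha f hf.1 f₀ hf₀.1
      _ ≤ γ * (r + r) := by
        rw [← dist_eq_norm]
        exact mul_le_mul_of_nonneg_left ((dist_triangle_right f f₀ c).trans
          (add_le_add hf.2 hf₀.2)) hγ
      _ = 2 * γ * r := by ring
  obtain ⟨F, hFA, hF, hcard⟩ :=
    exists_finset_subset_iUnion_closedBall_card_le hs (by positivity) hA
  have : ∀ x ∈ F, ∃ f ∈ S, a' f = x := fun x hx => hFA hx
  choose! pick hpickS hpick using this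
  refine ⟨F.image pick, ?_, fun f hf => ?_⟩
  · calc ((F.image pick).card : ℝ) ≤ F.card := by exact_mod_cast Finset.card_image_le
      _ ≤ _ := hcard
      _ = _ := by rw [WithNorm.finrank_eq]; ring_nf
  obtain ⟨x, hxF, hfx⟩ := Set.mem_iUnion₂.1 (hF (Set.mem_image_of_mem a' hf))
  rw [mem_closedBall, WithNorm.dist_eq, ← hpick x hxF] at hfx
  refine Set.mem_iUnion₂.2 ⟨pick x, Finset.mem_image_of_mem pick hxF, ?_⟩
  have hfM := hδ f hf.1
  have hpM := hδ _ (hpickS x hxF).1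
  rw [mem_closedBall, dist_eq_norm]
  calc ‖f - pick x‖
      = ‖(f - M (a f)) + (M (a f) - M (a (pick x))) - (pick x - M (a (pick x)))‖ := by abel_nf
    _ ≤ ‖f - M (a f)‖ + ‖M (a f) - M (a (pick x))‖ + ‖pick x - M (a (pick x))‖ :=
        (norm_sub_le _ _).trans (by gcongr; exact norm_add_le _ _)
    _ ≤ δ + γ * s + δ := by gcongr; exact (hM _ _).trans (by gcongr; exact hfx)
    _ = γ * s + 2 * δ := by ring

theorem exists_finset_cover_of_stableWidth_le {K : Set X} (hK : IsBounded K) {n : ℕ}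
    {γ r : ℝ} (hγ : 0 < γ) (hr : 0 < r) (hw : stableWidth X K n γ ≤ r / 8) (c : X) :
    ∃ T : Finset X, (T.card : ℝ) ≤ (1 + 16 * γ ^ 2) ^ n ∧
      K ∩ closedBall c r ⊆ ⋃ x ∈ T, closedBall x (r / 2) := by
  have hlim : Tendsto (fun η : ℝ => (1 + 16 * γ ^ 2 + η) ^ n) (𝓝[>] 0)
      (𝓝 ((1 + 16 * γ ^ 2) ^ n)) := by
    have : Continuous fun η : ℝ => (1 + 16 * γ ^ 2 + η) ^ n := by fun_prop
    simpa using (this.tendsto 0).mono_left nhdsWithin_le_nhds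
  refine Finset.exists_card_le_of_tendsto hlim ?_
  filter_upwards [self_mem_nhdsWithin] with η (hη : 0 < η)
  -- With `s = 4γr / D` and error `r / 8 + ηr / (8D)`, the radius `γs + 2 · error` is exactly
  -- `r / 2` and `1 + 4γr / s = 1 + 16γ² + η`.
  set D := 16 * γ ^ 2 + η with hD
  have hD0 : 0 < D := by positivity
  obtain ⟨nrm, a, M, hnrm, ha, hM, hδ⟩ := exists_approx_of_stableWidth_lt hK hγ.le
    (b := r / 8 + η * r / (8 * D)) (hw.trans_lt (by simp only [lt_add_iff_pos_right]; positivity))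
  obtain ⟨T, hT, hcov⟩ := exists_finset_cover_of_approx hnrm hγ.le hr.le
    (s := 4 * γ * r / D) (by positivity) ha hM hδ c
  refine ⟨T, hT.trans_eq ?_, hcov.trans_eq ?_⟩
  · congr 1; field_simp; rw [hD]; ring
  · congr! 4; field_simp; rw [hD]; ring

end StableWidth

theorem stmt6_general {X : Type*} [NormedAddCommGroup X]
    (γ : ℝ) (hγ : 1 ≤ γ) (K : Set X)
    (R : ℝ) (x₀ : X) (hKR : K ⊆ closedBall x₀ R)
    (hlim : Filter.Tendsto (fun m => stableWidth X K m γ) Filter.atTop (nhds 0))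
    (φ : ℝ → ℕ) (hφ : ∀ t : ℝ, 0 < t → φ t = sInf {m : ℕ | stableWidth X K m γ ≤ t})
    (ε : ℝ) (hε : 0 < ε)
    (L : ℕ) (hLge : R ≤ 2 ^ L * ε) :
    ∃ T : Finset X,
      (T.card : ℝ) ≤ (1 + 16 * γ ^ 2) ^ (∑ k ∈ Finset.Icc 1 L, φ (2 ^ k * ε / 8)) ∧
      K ⊆ ⋃ c ∈ T, closedBall c ε := by
  have hwidth (t : ℝ) (ht : 0 < t) : stableWidth X K (φ t) γ ≤ t := by
    obtain ⟨m, hm⟩ := (hlim.eventually_lt_const ht).exists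
    rw [hφ t ht]
    exact Nat.sInf_mem (s := {m | stableWidth X K m γ ≤ t}) ⟨m, hm.le⟩
  obtain ⟨T, hT, hcov⟩ := exists_finset_cover_of_forall_refine (r := fun k => 2 ^ k * ε)
    (N := fun k => (1 + 16 * γ ^ 2) ^ φ (2 ^ (k + 1) * ε / 8)) (fun k => by positivity)
    (hKR.trans (closedBall_subset_closedBall hLge)) fun k _ c => by
      obtain ⟨S, hS, hSK⟩ := exists_finset_cover_of_stableWidth_le (r := 2 ^ (k + 1) * ε)
        (isBounded_closedBall.subset hKR) (by linarith) (by positivity)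
        (hwidth _ (by positivity)) c
      exact ⟨S, hS, hSK.trans_eq (by congr! 4; ring)⟩
  refine ⟨T, hT.trans_eq ?_, by simpa using hcov⟩
  rw [Finset.prod_pow_eq_pow_sum, Finset.range_eq_Ico,
    Finset.sum_Ico_add' (fun k => φ (2 ^ k * ε / 8)) 0 L 1, zero_add,
    Finset.Ico_add_one_right_eq_Icc]

/-- Covering bound for K in terms of the function φ(t) = min{m : δ*_{m,γ}(K)_X ≤ t}:
with L the smallest positive integer such that 2^L ε ≥ R, the set K can be covered by
(1+16γ²)^{Σ_{k=1}^L φ(2^k ε/8)} balls of radius ε. -/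
theorem stmt6 {X : Type*} [NormedAddCommGroup X]
    (γ : ℝ) (hγ : 1 ≤ γ) (K : Set X) (hK : IsCompact K)
    (R : ℝ) (x₀ : X) (hKR : K ⊆ closedBall x₀ R)
    (hlim : Filter.Tendsto (fun m => stableWidth X K m γ) Filter.atTop (nhds 0))
    (φ : ℝ → ℕ) (hφ : ∀ t : ℝ, 0 < t → φ t = sInf {m : ℕ | stableWidth X K m γ ≤ t})
    (ε : ℝ) (hε : 0 < ε)
    (L : ℕ) (hL1 : 1 ≤ L) (hLge : R ≤ 2 ^ L * ε)
    (hLmin : ∀ L' : ℕ, 1 ≤ L' → R ≤ 2 ^ L' * ε → L ≤ L') :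
    ∃ T : Finset X,
      (T.card : ℝ) ≤ (1 + 16 * γ ^ 2) ^ (∑ k ∈ Finset.Icc 1 L, φ (2 ^ k * ε / 8)) ∧
      K ⊆ ⋃ c ∈ T, closedBall c ε :=
  stmt6_general γ hγ K R x₀ hKR hlim φ hφ ε hε L hLge
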